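/- arXiv:2105.05545 — 2 statements merged into one kernel-verified Lean document; each statement's English description precedes it below -/
import Mathlib

section
/- Define recursions α_0 = 1/2, β_0 = 3/2, α_{ℓ+1} = α_ℓ(1 − 5√(δ/α_ℓ))/2, β_{ℓ+1} = β_ℓ(1 + 5√(δ/α_ℓ))/2, with 0 < δ < 1/200, and let L be minimal with α_L ≤ 100δ. Then α_ℓ ≥ 2^{L−ℓ−1}·100δ for ℓ = 0,…,L−1, and β_L = 3·α_L·∏_{ℓ=0}^{L−1} (1 + 5√(δ/α_ℓ))/(1 − 5√(δ/α_ℓ)) ≤ C·δ where C = 300·∏_{ℓ≥2} (1 + 2^{−ℓ/2})/(1 − 2^{−ℓ/2}) < ∞. -/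
/-!
Each step halves `α` up to the factor `1 − 5√(δ/α_ℓ) ≤ 1`, so going back from the last index
`L − 1` (where still `α > 100δ`) the `α_ℓ` grow at least geometrically. Consequently
`5√(δ/α_ℓ) ≤ √(2^{-(L-ℓ+1)})`, and dividing the two recursions shows that `β_ℓ/α_ℓ` is
multiplied by `(1 + 5√(δ/α_ℓ))/(1 − 5√(δ/α_ℓ))` at each step. Read from `ℓ = L − 1` downwards,
the factors are dominated termwise by those of the convergent product defining `C`, and
`α_L ≤ 100δ` finishes the bound.
-/

open Real Finset

lemma one_add_div_one_sub_mono {s t : ℝ} (hst : s ≤ t) (ht : t < 1) :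
    (1 + s) / (1 - s) ≤ (1 + t) / (1 - t) := by
  rw [div_le_div_iff₀ (by linarith) (by linarith)]
  nlinarith

lemma one_le_one_add_div_one_sub {t : ℝ} (h0 : 0 ≤ t) (h1 : t < 1) :
    1 ≤ (1 + t) / (1 - t) := by
  simpa using one_add_div_one_sub_mono h0 h1

lemma log_one_add_div_one_sub_le {t : ℝ} (h0 : 0 ≤ t) (h1 : t ≤ 1 / 2) :
    log ((1 + t) / (1 - t)) ≤ 4 * t := by
  have hpos : 0 < 1 - t := by linarith
  calc log ((1 + t) / (1 - t)) ≤ (1 + t) / (1 - t) - 1 :=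
        log_le_sub_one_of_pos (div_pos (by linarith) hpos)
    _ ≤ 4 * t := by
        rw [div_sub_one hpos.ne', div_le_iff₀ hpos]
        nlinarith

lemma Real.prod_le_tprod_of_one_le {ι : Type*} {f : ι → ℝ} (hf : ∀ i, 1 ≤ f i)
    (hlog : Summable fun i ↦ log (f i)) (s : Finset ι) :
    ∏ i ∈ s, f i ≤ ∏' i, f i := by
  have hpos : ∀ i, 0 < f i := fun i ↦ one_pos.trans_le (hf i)
  calc ∏ i ∈ s, f i = rexp (∑ i ∈ s, log (f i)) := by
        rw [exp_sum]
        exact prod_congr rfl fun i _ ↦ (exp_log (hpos i)).symm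
    _ ≤ rexp (∑' i, log (f i)) :=
        exp_le_exp.2 (hlog.sum_le_tsum s fun i _ ↦ log_nonneg (hf i))
    _ = ∏' i, f i := rexp_tsum_eq_tprod hpos hlog

lemma prod_le_tprod_one_add_div_one_sub {ι : Type*} {t : ι → ℝ} (h0 : ∀ i, 0 ≤ t i)
    (h1 : ∀ i, t i ≤ 1 / 2) (ht : Summable t) (s : Finset ι) :
    ∏ i ∈ s, (1 + t i) / (1 - t i) ≤ ∏' i, (1 + t i) / (1 - t i) := by
  have hone : ∀ i, 1 ≤ (1 + t i) / (1 - t i) := fun i ↦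
    one_le_one_add_div_one_sub (h0 i) (by linarith [h1 i])
  refine Real.prod_le_tprod_of_one_le hone ?_ s
  exact (ht.mul_left 4).of_nonneg_of_le (fun i ↦ log_nonneg (hone i))
    fun i ↦ log_one_add_div_one_sub_le (h0 i) (h1 i)

lemma prod_range_le_tprod_of_le_reflect {s t : ℕ → ℝ} {L : ℕ} (hs : ∀ ℓ < L, 0 ≤ s ℓ)
    (hst : ∀ ℓ < L, s ℓ ≤ t (L - 1 - ℓ)) (h0 : ∀ k, 0 ≤ t k) (h1 : ∀ k, t k ≤ 1 / 2)
    (ht : Summable t) :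
    ∏ ℓ ∈ range L, (1 + s ℓ) / (1 - s ℓ) ≤ ∏' k, (1 + t k) / (1 - t k) :=
  calc ∏ ℓ ∈ range L, (1 + s ℓ) / (1 - s ℓ)
      ≤ ∏ ℓ ∈ range L, (1 + t (L - 1 - ℓ)) / (1 - t (L - 1 - ℓ)) := by
        refine prod_le_prod (fun ℓ hℓ ↦ ?_) fun ℓ hℓ ↦ ?_
        · exact zero_le_one.trans
            (one_le_one_add_div_one_sub (hs ℓ (mem_range.1 hℓ))
              (by linarith [hst ℓ (mem_range.1 hℓ), h1 (L - 1 - ℓ)]))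
        · exact one_add_div_one_sub_mono (hst ℓ (mem_range.1 hℓ))
            (by linarith [h1 (L - 1 - ℓ)])
    _ = ∏ k ∈ range L, (1 + t k) / (1 - t k) :=
        prod_range_reflect (fun k ↦ (1 + t k) / (1 - t k)) L
    _ ≤ ∏' k, (1 + t k) / (1 - t k) := prod_le_tprod_one_add_div_one_sub h0 h1 ht _

lemma sqrt_half_pow_eq (k : ℕ) : √((1 / 2 : ℝ) ^ k) = √(1 / 2) ^ k := by
  rw [← sqrt_sq (by positivity : 0 ≤ √(1 / 2 : ℝ) ^ k), ← pow_mul, mul_comm, pow_mul,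
    sq_sqrt (by norm_num)]

lemma summable_sqrt_half_pow_add_two : Summable fun k : ℕ ↦ √((1 / 2 : ℝ) ^ (k + 2)) := by
  simp only [sqrt_half_pow_eq]
  refine (summable_nat_add_iff 2).2 (summable_geometric_of_lt_one (sqrt_nonneg _) ?_)
  rw [sqrt_lt' one_pos]
  norm_num

lemma sqrt_half_pow_add_two_le (k : ℕ) : √((1 / 2 : ℝ) ^ (k + 2)) ≤ 1 / 2 := by
  calc √((1 / 2 : ℝ) ^ (k + 2)) ≤ √((1 / 2 : ℝ) ^ 2) :=
        sqrt_le_sqrt (pow_le_pow_of_le_one (by norm_num) (by norm_num) (by omega))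
    _ = 1 / 2 := sqrt_sq (by norm_num)

lemma two_pow_sub_mul_le_of_halving {a : ℕ → ℝ} {n : ℕ} (h : ∀ k < n, 2 * a (k + 1) ≤ a k) :
    ∀ ℓ ≤ n, 2 ^ (n - ℓ) * a n ≤ a ℓ := by
  induction n with
  | zero => intro ℓ hℓ; simp [Nat.le_zero.1 hℓ]
  | succ n ih =>
    intro ℓ hℓ
    rcases Nat.lt_or_ge n ℓ with hnℓ | hℓn
    · obtain rfl : ℓ = n + 1 := by omega
      simp
    · calc 2 ^ (n + 1 - ℓ) * a (n + 1) = 2 ^ (n - ℓ) * (2 * a (n + 1)) := by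
            rw [Nat.sub_add_comm hℓn, pow_succ]; ring
        _ ≤ 2 ^ (n - ℓ) * a n := by gcongr; exact h n n.lt_succ_self
        _ ≤ a ℓ := ih (fun k hk ↦ h k (by omega)) ℓ hℓn

lemma mul_eq_mul_prod_of_recursion {α β s : ℕ → ℝ} {n : ℕ}
    (hα : ∀ ℓ, α (ℓ + 1) = α ℓ * (1 - s ℓ) / 2) (hβ : ∀ ℓ, β (ℓ + 1) = β ℓ * (1 + s ℓ) / 2)
    (hs : ∀ ℓ < n, s ℓ ≠ 1) :
    α 0 * β n = β 0 * α n * ∏ ℓ ∈ range n, (1 + s ℓ) / (1 - s ℓ) := by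
  induction n with
  | zero => simp [mul_comm]
  | succ n ih =>
    have hne : 1 - s n ≠ 0 := sub_ne_zero.2 (hs n n.lt_succ_self).symm
    rw [prod_range_succ, hα, hβ, ← mul_div_assoc, ← mul_assoc, ih fun ℓ hℓ ↦ hs ℓ (by omega)]
    field_simp

lemma five_mul_sqrt_div_le {δ a : ℝ} {m : ℕ} (ha : 0 < a) (h : 2 ^ m * (100 * δ) ≤ a) :
    5 * √(δ / a) ≤ √((1 / 2 : ℝ) ^ (m + 2)) := by
  rw [show (5 : ℝ) = √(5 ^ 2) from (sqrt_sq (by norm_num)).symm, ← sqrt_mul (by norm_num)]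
  refine sqrt_le_sqrt ?_
  rw [← mul_div_assoc, div_le_iff₀ ha, pow_add, one_div_pow, one_div_pow]
  calc (5 : ℝ) ^ 2 * δ = 1 / 2 ^ m * (1 / 2 ^ 2) * (2 ^ m * (100 * δ)) := by
        field_simp; ring
    _ ≤ 1 / 2 ^ m * (1 / 2 ^ 2) * a := by gcongr

theorem stmt9_general
    (δ : ℝ) (hδ : 0 < δ)
    (α β : ℕ → ℝ) (hα0 : α 0 = 1 / 2) (hβ0 : β 0 = 3 / 2)
    (hrecα : ∀ ℓ, α (ℓ + 1) = α ℓ * (1 - 5 * Real.sqrt (δ / α ℓ)) / 2)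
    (hrecβ : ∀ ℓ, β (ℓ + 1) = β ℓ * (1 + 5 * Real.sqrt (δ / α ℓ)) / 2)
    (L : ℕ) (hL : α L ≤ 100 * δ) (hLmin : ∀ k < L, 100 * δ < α k) :
    (∀ ℓ < L, 2 ^ (L - ℓ - 1) * (100 * δ) ≤ α ℓ) ∧
    β L = 3 * α L * ∏ ℓ ∈ Finset.range L,
      (1 + 5 * Real.sqrt (δ / α ℓ)) / (1 - 5 * Real.sqrt (δ / α ℓ)) ∧
    β L ≤ (300 * ∏' ℓ : ℕ,
      (1 + Real.sqrt ((1 / 2 : ℝ) ^ (ℓ + 2))) /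
      (1 - Real.sqrt ((1 / 2 : ℝ) ^ (ℓ + 2)))) * δ := by
  have hαpos : ∀ ℓ < L, 0 < α ℓ := fun ℓ hℓ ↦ (by positivity : (0 : ℝ) < 100 * δ).trans (hLmin ℓ hℓ)
  have hlower : ∀ ℓ < L, 2 ^ (L - ℓ - 1) * (100 * δ) ≤ α ℓ := by
    have halving : ∀ k < L - 1, 2 * α (k + 1) ≤ α k := fun k hk ↦ by
      rw [hrecα]
      nlinarith [hαpos k (by omega), sqrt_nonneg (δ / α k)]
    intro ℓ hℓ
    calc 2 ^ (L - ℓ - 1) * (100 * δ) ≤ 2 ^ (L - 1 - ℓ) * α (L - 1) := by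
          rw [Nat.sub_right_comm]; gcongr; exact (hLmin _ (by omega)).le
      _ ≤ α ℓ := two_pow_sub_mul_le_of_halving halving ℓ (by omega)
  have hsmall : ∀ ℓ < L, 5 * √(δ / α ℓ) ≤ √((1 / 2 : ℝ) ^ (L - 1 - ℓ + 2)) := fun ℓ hℓ ↦ by
    rw [Nat.sub_right_comm]
    exact five_mul_sqrt_div_le (hαpos ℓ hℓ) (hlower ℓ hℓ)
  have hlt : ∀ ℓ < L, 5 * √(δ / α ℓ) < 1 := fun ℓ hℓ ↦ by
    linarith [hsmall ℓ hℓ, sqrt_half_pow_add_two_le (L - 1 - ℓ)]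
  have hformula : β L = 3 * α L * ∏ ℓ ∈ range L,
      (1 + 5 * √(δ / α ℓ)) / (1 - 5 * √(δ / α ℓ)) := by
    have h := mul_eq_mul_prod_of_recursion (s := fun ℓ ↦ 5 * √(δ / α ℓ)) (n := L) hrecα hrecβ
      fun ℓ hℓ ↦ (hlt ℓ hℓ).ne
    rw [hα0, hβ0] at h
    linarith
  have hprod_nonneg : 0 ≤ ∏ ℓ ∈ range L, (1 + 5 * √(δ / α ℓ)) / (1 - 5 * √(δ / α ℓ)) :=
    prod_nonneg fun ℓ hℓ ↦ zero_le_one.trans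
      (one_le_one_add_div_one_sub (by positivity) (hlt ℓ (mem_range.1 hℓ)))
  have hprod := prod_range_le_tprod_of_le_reflect (fun ℓ _ ↦ by positivity) hsmall
    (fun k ↦ sqrt_nonneg _) sqrt_half_pow_add_two_le summable_sqrt_half_pow_add_two
  refine ⟨hlower, hformula, ?_⟩
  rw [hformula]
  calc _ ≤ 3 * (100 * δ) * ∏' k : ℕ, (1 + √((1 / 2 : ℝ) ^ (k + 2))) / (1 - √((1 / 2) ^ (k + 2))) :=
        mul_le_mul (by linarith) hprod hprod_nonneg (by positivity)
    _ = _ := by ring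

/-- For the recursions `α_0 = 1/2`, `β_0 = 3/2`,
`α_{ℓ+1} = α_ℓ(1 − 5√(δ/α_ℓ))/2`, `β_{ℓ+1} = β_ℓ(1 + 5√(δ/α_ℓ))/2` with
`0 < δ < 1/200`, and `L` minimal with `α_L ≤ 100δ`: one has
`α_ℓ ≥ 2^{L−ℓ−1}·100δ` for `ℓ < L`, the product formula
`β_L = 3·α_L·∏_{ℓ<L} (1+5√(δ/α_ℓ))/(1−5√(δ/α_ℓ))`, and `β_L ≤ C·δ` with
`C = 300·∏_{ℓ≥2} (1+√(2^{-ℓ}))/(1−√(2^{-ℓ}))`. -/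
theorem stmt9
    (δ : ℝ) (hδ : 0 < δ) (hδ' : δ < 1 / 200)
    (α β : ℕ → ℝ) (hα0 : α 0 = 1 / 2) (hβ0 : β 0 = 3 / 2)
    (hrecα : ∀ ℓ, α (ℓ + 1) = α ℓ * (1 - 5 * Real.sqrt (δ / α ℓ)) / 2)
    (hrecβ : ∀ ℓ, β (ℓ + 1) = β ℓ * (1 + 5 * Real.sqrt (δ / α ℓ)) / 2)
    (L : ℕ) (hL : α L ≤ 100 * δ) (hLmin : ∀ k < L, 100 * δ < α k) :
    (∀ ℓ < L, 2 ^ (L - ℓ - 1) * (100 * δ) ≤ α ℓ) ∧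
    β L = 3 * α L * ∏ ℓ ∈ Finset.range L,
      (1 + 5 * Real.sqrt (δ / α ℓ)) / (1 - 5 * Real.sqrt (δ / α ℓ)) ∧
    β L ≤ (300 * ∏' ℓ : ℕ,
      (1 + Real.sqrt ((1 / 2 : ℝ) ^ (ℓ + 2))) /
      (1 - Real.sqrt ((1 / 2 : ℝ) ^ (ℓ + 2)))) * δ :=
  stmt9_general δ hδ α β hα0 hβ0 hrecα hrecβ L hL hLmin
end

section
/- Let μ be a finite measure on D of total mass M, V_n ⊂ L²(D,μ) a finite-dimensional subspace containing the constant functions, X = {x¹,…,x^m} a sample and w_i ≥ 0 weights such that the discrete norm ‖v‖_X² = (1/m)∑_i w_i|v(x^i)|² satisfies β^{-1}‖v‖² ≤ ‖v‖_X² ≤ α‖v‖² for all v ∈ V_n. Then for every bounded u, the weighted least-squares projection P^X_{V_n}u satisfies ‖u − P^X_{V_n}u‖_{L²} ≤ √M·(1 + √(αβ))·min_{v∈V_n}‖u − v‖_{L∞}. -/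
open MeasureTheory

/-! Split `u - P u = (u - v) + (v - P u)`. The first term is bounded in `L²` by `√M ‖u - v‖_∞`.
The second lies in `V_n`, so the lower framing bounds its `L²` norm by `√β ‖v - P u‖_X`; since
`u - P u` is `X`-orthogonal to `V_n`, Pythagoras gives `‖v - P u‖_X ≤ ‖u - v‖_X`, and
`‖u - v‖_X ≤ ‖1‖_X ‖u - v‖_∞ ≤ √(αM) ‖u - v‖_∞` by the upper framing applied to the constant `1`. -/

section WeightedSums

variable {ι : Type*} [Fintype ι] {w : ι → ℝ}

theorem sum_mul_norm_sq_le_sum_mul_norm_sub_sq (hw : ∀ i, 0 ≤ w i) {r g : ι → ℂ}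
    (horth : ∑ i, (w i : ℂ) * r i * starRingEnd ℂ (g i) = 0) :
    ∑ i, w i * ‖g i‖ ^ 2 ≤ ∑ i, w i * ‖r i - g i‖ ^ 2 := by
  have hpyth : ∑ i, w i * ‖r i - g i‖ ^ 2 = ∑ i, w i * ‖r i‖ ^ 2 + ∑ i, w i * ‖g i‖ ^ 2 -
      2 * (∑ i, (w i : ℂ) * r i * starRingEnd ℂ (g i)).re := by
    simp only [← Complex.normSq_eq_norm_sq, Complex.normSq_sub, Complex.re_sum, mul_assoc,
      Complex.re_ofReal_mul, Finset.mul_sum, ← Finset.sum_add_distrib, ← Finset.sum_sub_distrib]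
    exact Finset.sum_congr rfl fun i _ => by ring
  have hr : 0 ≤ ∑ i, w i * ‖r i‖ ^ 2 := Finset.sum_nonneg fun i _ => by have := hw i; positivity
  rw [hpyth, horth, Complex.zero_re]
  linarith

theorem sum_mul_norm_sq_le_of_norm_le (hw : ∀ i, 0 ≤ w i) {a : ι → ℂ} {t : ℝ}
    (ha : ∀ i, ‖a i‖ ≤ t) : ∑ i, w i * ‖a i‖ ^ 2 ≤ (∑ i, w i) * t ^ 2 := by
  rw [Finset.sum_mul]
  gcongr with i
  · exact hw i
  · exact ha i

end WeightedSums

section L2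

variable {D E : Type*} [MeasurableSpace D] {μ : Measure D} [NormedAddCommGroup E]

theorem MeasureTheory.MemLp.toReal_eLpNorm_two {f : D → E} (hf : MemLp f 2 μ) :
    (eLpNorm f 2 μ).toReal = Real.sqrt (∫ y, ‖f y‖ ^ 2 ∂μ) := by
  have hnn : 0 ≤ ∫ y, ‖f y‖ ^ 2 ∂μ := integral_nonneg fun y => by positivity
  rw [hf.eLpNorm_eq_integral_rpow_norm two_ne_zero ENNReal.ofNat_ne_top,
    ENNReal.toReal_ofReal (by positivity), Real.sqrt_eq_rpow]
  norm_num

theorem sqrt_integral_norm_add_sq_le {f g : D → E} (hf : MemLp f 2 μ) (hg : MemLp g 2 μ) :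
    Real.sqrt (∫ y, ‖f y + g y‖ ^ 2 ∂μ) ≤
      Real.sqrt (∫ y, ‖f y‖ ^ 2 ∂μ) + Real.sqrt (∫ y, ‖g y‖ ^ 2 ∂μ) := by
  change Real.sqrt (∫ y, ‖(f + g) y‖ ^ 2 ∂μ) ≤ _
  rw [← hf.toReal_eLpNorm_two, ← hg.toReal_eLpNorm_two, ← (hf.add hg).toReal_eLpNorm_two,
    ← ENNReal.toReal_add hf.eLpNorm_ne_top hg.eLpNorm_ne_top]
  exact ENNReal.toReal_mono (ENNReal.add_ne_top.mpr ⟨hf.eLpNorm_ne_top, hg.eLpNorm_ne_top⟩)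
    (eLpNorm_add_le hf.aestronglyMeasurable hg.aestronglyMeasurable one_le_two)

theorem integral_norm_sq_le_of_norm_le [IsFiniteMeasure μ] {f : D → E} {t : ℝ}
    (hf : ∀ y, ‖f y‖ ≤ t) : ∫ y, ‖f y‖ ^ 2 ∂μ ≤ μ.real Set.univ * t ^ 2 := by
  calc ∫ y, ‖f y‖ ^ 2 ∂μ ≤ ∫ _, t ^ 2 ∂μ :=
        integral_mono_of_nonneg (ae_of_all _ fun y => by positivity) (integrable_const _)
          (ae_of_all _ fun y => pow_le_pow_left₀ (norm_nonneg _) (hf y) 2)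
    _ = μ.real Set.univ * t ^ 2 := by rw [integral_const, smul_eq_mul]

end L2

theorem stmt12_general
    {D : Type*} [MeasurableSpace D] (μ : Measure D)
    (M : ℝ) (hM : 0 ≤ M) (hμ : μ Set.univ = ENNReal.ofReal M)
    (V : Submodule ℂ (D → ℂ))
    (hconst : (fun _ => (1 : ℂ)) ∈ V)
    (hVmem : ∀ v ∈ V, MemLp v 2 μ)
    {m : ℕ} (hm : 0 < m) (X : Fin m → D) (w : Fin m → ℝ) (hw : ∀ i, 0 ≤ w i)
    (α β : ℝ) (hβ : 0 < β)
    (hframe : ∀ v ∈ V,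
      β⁻¹ * ∫ y, ‖v y‖ ^ 2 ∂μ ≤ (1 / (m : ℝ)) * ∑ i, w i * ‖v (X i)‖ ^ 2 ∧
      (1 / (m : ℝ)) * ∑ i, w i * ‖v (X i)‖ ^ 2 ≤ α * ∫ y, ‖v y‖ ^ 2 ∂μ)
    (u : D → ℂ) (hu : MemLp u 2 μ)
    (Pu : D → ℂ) (hPuV : Pu ∈ V)
    -- `Pu` is the orthogonal projection of `u` on `V_n` for the discrete inner
    -- product, characterized by the normal equations:
    (hproj : ∀ v ∈ V,
      (1 / (m : ℂ)) * ∑ i, (w i : ℂ) * (u (X i) - Pu (X i)) *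
        starRingEnd ℂ (v (X i)) = 0) :
    ∀ v ∈ V, ∀ t : ℝ, (∀ y, ‖u y - v y‖ ≤ t) →
      Real.sqrt (∫ y, ‖u y - Pu y‖ ^ 2 ∂μ) ≤
        Real.sqrt M * (1 + Real.sqrt (α * β)) * t := by
  intro v hv t ht
  rcases isEmpty_or_nonempty D with hD | ⟨⟨y₀⟩⟩
  · have hM0 : M = 0 := le_antisymm
      (ENNReal.ofReal_eq_zero.mp (by rw [← hμ, Set.univ_eq_empty_iff.mpr hD, measure_empty])) hM
    simp [Measure.eq_zero_of_isEmpty μ, hM0]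
  have ht0 : 0 ≤ t := (norm_nonneg _).trans (ht y₀)
  have : IsFiniteMeasure μ := ⟨by simp [hμ]⟩
  have hμM : μ.real Set.univ = M := by simp [measureReal_def, hμ, hM]
  have hmass : (1 / (m : ℝ)) * ∑ i, w i ≤ α * M := by
    simpa [integral_const, hμM] using (hframe _ hconst).2
  set g : D → ℂ := fun y => v y - Pu y
  have hgV : g ∈ V := V.sub_mem hv hPuV
  have horth := (mul_eq_zero.mp (hproj g hgV)).resolve_left (by simp [hm.ne'])
  have hX : (1 / (m : ℝ)) * ∑ i, w i * ‖g (X i)‖ ^ 2 ≤ α * M * t ^ 2 :=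
    calc _ ≤ (1 / (m : ℝ)) * ((∑ i, w i) * t ^ 2) := by
          gcongr
          exact (sum_mul_norm_sq_le_sum_mul_norm_sub_sq hw horth).trans
            (sum_mul_norm_sq_le_of_norm_le hw fun i => by simpa [g] using ht (X i))
      _ ≤ α * M * t ^ 2 := by
          rw [← mul_assoc]
          exact mul_le_mul_of_nonneg_right hmass (sq_nonneg t)
  have hgL2 : ∫ y, ‖g y‖ ^ 2 ∂μ ≤ α * β * (M * t ^ 2) :=
    ((inv_mul_le_iff₀ hβ).mp ((hframe g hgV).1.trans hX)).trans_eq (by ring)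
  have hfL2 : ∫ y, ‖u y - v y‖ ^ 2 ∂μ ≤ M * t ^ 2 := hμM ▸ integral_norm_sq_le_of_norm_le ht
  calc Real.sqrt (∫ y, ‖u y - Pu y‖ ^ 2 ∂μ) = Real.sqrt (∫ y, ‖(u y - v y) + g y‖ ^ 2 ∂μ) := by
        simp only [g, sub_add_sub_cancel]
    _ ≤ Real.sqrt (∫ y, ‖u y - v y‖ ^ 2 ∂μ) + Real.sqrt (∫ y, ‖g y‖ ^ 2 ∂μ) :=
        sqrt_integral_norm_add_sq_le (hu.sub (hVmem v hv)) (hVmem g hgV)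
    _ ≤ Real.sqrt (M * t ^ 2) + Real.sqrt (α * β * (M * t ^ 2)) := by gcongr
    _ = Real.sqrt M * (1 + Real.sqrt (α * β)) * t := by
        rw [Real.sqrt_mul' (α * β) (by positivity : 0 ≤ M * t ^ 2), Real.sqrt_mul hM,
          Real.sqrt_sq ht0]
        ring

/-- Temlyakov-type lemma: if `μ(D) = M < ∞`, `V_n` contains the constants, and
the discrete norm `‖v‖_X² = (1/m)∑ᵢ wᵢ|v(xⁱ)|²` satisfies the framing
`β⁻¹‖v‖² ≤ ‖v‖_X² ≤ α‖v‖²` on `V_n`, then the weighted least-squares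
projection `P^X_{V_n}u` of a bounded `u` satisfies
`‖u − P^X_{V_n}u‖_{L²} ≤ √M (1 + √(αβ)) min_{v∈V_n} ‖u − v‖_{L∞}`. -/
theorem stmt12
    {D : Type*} [MeasurableSpace D] (μ : Measure D)
    (M : ℝ) (hM : 0 ≤ M) (hμ : μ Set.univ = ENNReal.ofReal M)
    (V : Submodule ℂ (D → ℂ)) (hVfin : FiniteDimensional ℂ V)
    (hconst : (fun _ => (1 : ℂ)) ∈ V)
    (hVmem : ∀ v ∈ V, MemLp v 2 μ)
    {m : ℕ} (hm : 0 < m) (X : Fin m → D) (w : Fin m → ℝ) (hw : ∀ i, 0 ≤ w i)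
    (α β : ℝ) (hα : 0 < α) (hβ : 0 < β)
    (hframe : ∀ v ∈ V,
      β⁻¹ * ∫ y, ‖v y‖ ^ 2 ∂μ ≤ (1 / (m : ℝ)) * ∑ i, w i * ‖v (X i)‖ ^ 2 ∧
      (1 / (m : ℝ)) * ∑ i, w i * ‖v (X i)‖ ^ 2 ≤ α * ∫ y, ‖v y‖ ^ 2 ∂μ)
    (u : D → ℂ) (hu : MemLp u 2 μ)
    (Pu : D → ℂ) (hPuV : Pu ∈ V)
    -- `Pu` is the orthogonal projection of `u` on `V_n` for the discrete inner
    -- product, characterized by the normal equations: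
    (hproj : ∀ v ∈ V,
      (1 / (m : ℂ)) * ∑ i, (w i : ℂ) * (u (X i) - Pu (X i)) *
        starRingEnd ℂ (v (X i)) = 0) :
    ∀ v ∈ V, ∀ t : ℝ, (∀ y, ‖u y - v y‖ ≤ t) →
      Real.sqrt (∫ y, ‖u y - Pu y‖ ^ 2 ∂μ) ≤
        Real.sqrt M * (1 + Real.sqrt (α * β)) * t :=
  stmt12_general μ M hM hμ V hconst hVmem hm X w hw α β hβ hframe u hu Pu hPuV hproj
end
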